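/- For any k with 0 ≤ k ≤ n, ∑_{A ⊆ [n], |A| = k} q₁^{k(n-k) - γ(A)} · q₂^{γ(A)} equals the (q₁,q₂)-Gaussian binomial coefficient [n]!/([k]![n-k]!), where γ(A) = |{(i,j) : i ∈ A, j ∈ [n]∖A, i > j}| and [m] = q₁^{m-1} + q₁^{m-2}q₂ + ⋯ + q₂^{m-1}. -/

import Mathlib

open Finset

variable {F : Type*} [Field F]

/-- The `(q₁,q₂)`-integer `[m] = q₁^{m-1} + q₁^{m-2}q₂ + ⋯ + q₂^{m-1}`. -/
def qint (q₁ q₂ : F) (m : ℕ) : F := ∑ a ∈ range m, q₁ ^ a * q₂ ^ (m - 1 - a)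

/-- The `(q₁,q₂)`-factorial `[m]! = [1][2]⋯[m]`. -/
def qfac (q₁ q₂ : F) (m : ℕ) : F := ∏ i ∈ range m, qint q₁ q₂ (i + 1)

/-- The `(q₁,q₂)`-Gaussian binomial coefficient `[n]!/([k]![n-k]!)`. -/
def qbin (q₁ q₂ : F) (n k : ℕ) : F := qfac q₁ q₂ n / (qfac q₁ q₂ k * qfac q₁ q₂ (n - k))

/-- `γ(A) = |{(i,j) : i ∈ A, j ∈ [n]∖A, i > j}|`. -/
def gam {n : ℕ} (A : Finset (Fin n)) : ℕ :=
  (univ.filter fun p : Fin n × Fin n => p.1 ∈ A ∧ p.2 ∉ A ∧ p.2 < p.1).card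

/-! Splitting off the last element of `[n+1]` gives a `(q₁,q₂)`-Pascal recurrence for the
left-hand side: a `(k+1)`-subset avoiding `n+1` keeps its `γ` and gains `k+1` non-inverted
pairs, while one containing `n+1` gains `n-k` inversions, one for each element outside it.
Once denominators are cleared, the Gaussian side satisfies the same recurrence because
`[n+1] = q₁^{k+1}[n-k] + q₂^{n-k}[k+1]`. -/

theorem Finset.sum_powersetCard_succ_insert {α M : Type*} [DecidableEq α] [AddCommMonoid M]
    {a : α} {s : Finset α} (ha : a ∉ s) (k : ℕ) (f : Finset α → M) :
    ∑ t ∈ powersetCard (k + 1) (insert a s), f t =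
      ∑ t ∈ powersetCard (k + 1) s, f t + ∑ t ∈ powersetCard k s, f (insert a t) := by
  have hnotMem {t} (ht : t ∈ powersetCard k s) : a ∉ t :=
    fun h => ha ((mem_powersetCard.1 ht).1 h)
  rw [powersetCard_succ_insert ha, sum_union, sum_image]
  · intro t ht u hu h
    rw [← erase_insert (hnotMem ht), ← erase_insert (hnotMem hu), h]
  · refine disjoint_left.2 fun t ht htu => ?_
    obtain ⟨u, -, rfl⟩ := mem_image.1 htu
    exact ha ((mem_powersetCard.1 ht).1 (mem_insert_self a u))

section gam

variable {n : ℕ} (A : Finset (Fin n))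

lemma gam_eq_sum_card_Iio_sdiff :
    gam A = ∑ i ∈ A, #(Iio i \ A) := by
  rw [← univ_inter A, ← sum_ite_mem, gam, card_eq_sum_ones, sum_filter, Fintype.sum_prod_type]
  refine sum_congr rfl fun i _ => ?_
  by_cases hi : i ∈ A
  · simp only [hi, if_true, sum_boole, Nat.cast_id]
    congr 1; ext j; simp [hi, and_comm]
  · simp [hi]

lemma gam_le_card_mul : gam A ≤ #A * (n - #A) := by
  have hcompl (i : Fin n) : #(Iio i \ A) ≤ n - #A := by
    simpa [card_univ_sdiff] using card_le_card (sdiff_subset_sdiff (subset_univ (Iio i)) le_rfl)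
  rw [gam_eq_sum_card_Iio_sdiff, ← smul_eq_mul]
  exact sum_le_card_nsmul _ _ _ fun i _ => hcompl i

lemma card_Iio_castSucc_sdiff_map (i : Fin n) :
    #(Iio i.castSucc \ A.map Fin.castSuccEmb) = #(Iio i \ A) := by
  rw [Fin.Iio_castSucc, ← Finset.map_sdiff, card_map]

lemma gam_map_castSuccEmb :
    gam (A.map Fin.castSuccEmb) = gam A := by
  simp only [gam_eq_sum_card_Iio_sdiff, sum_map, Fin.castSuccEmb_apply,
    card_Iio_castSucc_sdiff_map]

lemma gam_insert_last_map_castSuccEmb :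
    gam (insert (Fin.last n) (A.map Fin.castSuccEmb)) = gam A + (n - #A) := by
  have hlast : Fin.last n ∉ A.map Fin.castSuccEmb := by simp [Fin.castSucc_ne_last]
  rw [gam_eq_sum_card_Iio_sdiff, sum_insert hlast, add_comm, gam_eq_sum_card_Iio_sdiff, sum_map]
  congr 1
  · refine sum_congr rfl fun i _ => ?_
    rw [Fin.castSuccEmb_apply, sdiff_insert_of_notMem (by simpa using (Fin.castSucc_lt_last i).le),
      card_Iio_castSucc_sdiff_map]
  · rw [Fin.Iio_last_eq_map, sdiff_insert_of_notMem (by simp [Fin.castSucc_ne_last]),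
      ← Finset.map_sdiff, card_map, card_univ_sdiff, Fintype.card_fin]

end gam

lemma qint_add (q₁ q₂ : F) (a b : ℕ) :
    qint q₁ q₂ (a + b) = q₁ ^ a * qint q₁ q₂ b + q₂ ^ b * qint q₁ q₂ a := by
  rw [qint, sum_range_add, add_comm, qint, qint, mul_sum, mul_sum]
  congr 1 <;> refine sum_congr rfl fun c hc => ?_ <;> rw [mem_range] at hc
  · rw [show a + b - 1 - (a + c) = b - 1 - c by omega, pow_add]; ring
  · rw [show a + b - 1 - c = b + (a - 1 - c) by omega, pow_add]; ring

lemma qfac_succ (q₁ q₂ : F) (m : ℕ) :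
    qfac q₁ q₂ (m + 1) = qfac q₁ q₂ m * qint q₁ q₂ (m + 1) :=
  prod_range_succ _ m

lemma qfac_ne_zero {q₁ q₂ : F} (hq : ∀ m : ℕ, 1 ≤ m → qint q₁ q₂ m ≠ 0)
    (m : ℕ) : qfac q₁ q₂ m ≠ 0 :=
  prod_ne_zero_iff.2 fun i _ => hq (i + 1) (Nat.le_add_left 1 i)

def gamSum {R : Type*} [CommSemiring R] (q₁ q₂ : R) (n k : ℕ) : R :=
  ∑ A ∈ powersetCard k (univ : Finset (Fin n)), q₁ ^ (k * (n - k) - gam A) * q₂ ^ gam A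

section gamSum

variable {R : Type*} [CommSemiring R] (q₁ q₂ : R)

lemma gamSum_zero_right (n : ℕ) : gamSum q₁ q₂ n 0 = 1 := by
  simp [gamSum, gam]

lemma gamSum_self (n : ℕ) : gamSum q₁ q₂ n n = 1 := by
  have huniv : powersetCard n (univ : Finset (Fin n)) = {univ} := by
    simpa using powersetCard_self (univ : Finset (Fin n))
  simp [gamSum, huniv, gam]

lemma gamSum_succ_succ (n k : ℕ) :
    gamSum q₁ q₂ (n + 1) (k + 1) =
      q₁ ^ (k + 1) * gamSum q₁ q₂ n (k + 1) + q₂ ^ (n - k) * gamSum q₁ q₂ n k := by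
  rw [gamSum, Fin.univ_castSuccEmb, cons_eq_insert,
    sum_powersetCard_succ_insert (by simp [Fin.castSucc_ne_last]), powersetCard_map, sum_map,
    powersetCard_map, sum_map, gamSum, gamSum, mul_sum, mul_sum]
  simp only [RelEmbedding.coe_toEmbedding, mapEmbedding_apply]
  congr 1 <;> refine sum_congr rfl fun A hA => ?_ <;> obtain ⟨-, hcard⟩ := mem_powersetCard.1 hA
  · have hkn : k + 1 ≤ n := by simpa [hcard] using card_le_univ A
    have hle := gam_le_card_mul A
    rw [hcard] at hle
    rw [gam_map_castSuccEmb, ← mul_assoc, ← pow_add, Nat.add_sub_add_right,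
      show n - k = n - (k + 1) + 1 by omega, mul_add_one]
    congr 2
    omega
  · rw [gam_insert_last_map_castSuccEmb, hcard, Nat.add_sub_add_right, add_one_mul,
      Nat.add_sub_add_right, pow_add]
    ring

end gamSum

lemma gamSum_mul_qfac_mul_qfac (q₁ q₂ : F) {n k : ℕ} (hk : k ≤ n) :
    gamSum q₁ q₂ n k * (qfac q₁ q₂ k * qfac q₁ q₂ (n - k)) = qfac q₁ q₂ n := by
  induction n generalizing k with
  | zero => simp [Nat.le_zero.1 hk, gamSum_self, qfac]
  | succ n ih =>
    rcases k with _ | k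
    · simp [gamSum_zero_right, qfac]
    obtain hkn | rfl := (Nat.le_of_succ_le_succ hk).lt_or_eq
    · obtain ⟨m, hm⟩ : ∃ m, n - k = m + 1 := ⟨n - (k + 1), by omega⟩
      have hsmall := ih (k := k + 1) hkn
      have hlarge := ih hkn.le
      rw [show n - (k + 1) = m by omega, qfac_succ q₁ q₂ k] at hsmall
      rw [hm, qfac_succ q₁ q₂ m] at hlarge
      have hint : qint q₁ q₂ (n + 1) =
          q₁ ^ (k + 1) * qint q₁ q₂ (m + 1) + q₂ ^ (m + 1) * qint q₁ q₂ (k + 1) := by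
        rw [show n + 1 = (k + 1) + (m + 1) by omega, qint_add]
      rw [Nat.add_sub_add_right, hm, gamSum_succ_succ, hm, qfac_succ q₁ q₂ n, hint,
        qfac_succ q₁ q₂ k, qfac_succ q₁ q₂ m]
      linear_combination (q₁ ^ (k + 1) * qint q₁ q₂ (m + 1)) * hsmall +
        (q₂ ^ (m + 1) * qint q₁ q₂ (k + 1)) * hlarge
    · simp [gamSum_self, qfac]

/-- For `0 ≤ k ≤ n`,
`∑_{A ⊆ [n], |A| = k} q₁^{k(n-k) - γ(A)} q₂^{γ(A)} = [n]!/([k]![n-k]!)`.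
This identity of polynomials in `q₁, q₂` is stated over an arbitrary field in which
the `(q₁,q₂)`-integers are nonzero (e.g. the rational function field `ℚ(q₁,q₂)`). -/
theorem gaussian_binomial_gamma (q₁ q₂ : F)
    (hq : ∀ m : ℕ, 1 ≤ m → qint q₁ q₂ m ≠ 0) (n k : ℕ) (hk : k ≤ n) :
    ∑ A ∈ powersetCard k (univ : Finset (Fin n)),
        q₁ ^ (k * (n - k) - gam A) * q₂ ^ (gam A) =
      qbin q₁ q₂ n k := by
  rw [qbin, eq_div_iff (mul_ne_zero (qfac_ne_zero hq k) (qfac_ne_zero hq (n - k)))]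
  exact gamSum_mul_qfac_mul_qfac q₁ q₂ hk
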